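/- arXiv:1106.1691 — 4 statements merged into one kernel-verified Lean document; each statement's English description precedes it below -/
import Mathlib

section
/- Let a_i, b_i define a Jacobi matrix J and let J̃ be the matrix obtained by replacing ã_n = θ²(a_n + M), b̃_{n-1} = θ b_{n-1}, b̃_n = θ b_n for some fixed 0 < n < N-1, θ > 0, M ∈ ℝ, leaving all other entries unchanged. Let P_i, P̃_i be the first-kind polynomials of J and J̃, and φ_i the second-kind polynomials defined by φ_n = 0, φ_{n+1} = 1/b_n, b_{i-1}φ_i = (λ-a_{i-1})φ_{i-1} - b_{i-2}φ_{i-2}. Then for all n+1 ≤ i ≤ N-1: P̃_i(λ) = A(λ) φ_i(λ) P_n(λ) + P_i(λ), where A(λ) = λ(θ^{-2} - 1) - M. -/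
open Matrix BigOperators

/-!
Below `n` the two recurrences coincide, so `P̃ᵢ = Pᵢ` for `i < n`, and the recurrence at `n - 1`
gives `P̃ₙ = θ⁻¹ Pₙ`. Multiplying `P̃ₙ` back by `θ` turns the recurrence for `P̃` from `n` on into
the unperturbed one. `A φᵢ Pₙ + Pᵢ` satisfies the same recurrence (it is linear, and `φ`, `P` solve
it), agrees with `P̃` at `n + 1` by a direct computation, and at `n` because `φₙ = 0`. A solution of
a three-term recurrence with nonvanishing leading coefficients is determined by two consecutive
values.
-/

theorem eq_of_threeTermRecurrence {R : Type*} [CommRing R] [IsDomain R] {c d e x y : ℕ → R}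
    {k m : ℕ} (hc : ∀ i, k ≤ i → i + 2 ≤ m → c i ≠ 0)
    (hx : ∀ i, k ≤ i → i + 2 ≤ m → c i * x (i + 2) = d i * x (i + 1) - e i * x i)
    (hy : ∀ i, k ≤ i → i + 2 ≤ m → c i * y (i + 2) = d i * y (i + 1) - e i * y i)
    (h0 : x k = y k) (h1 : x (k + 1) = y (k + 1)) :
    ∀ i, k ≤ i → i ≤ m → x i = y i := by
  intro i
  induction i using Nat.strong_induction_on with
  | _ i ih =>
    intro hki him
    obtain rfl | rfl | hi : i = k ∨ i = k + 1 ∨ k + 2 ≤ i := by omega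
    · exact h0
    · exact h1
    · obtain ⟨j, rfl⟩ : ∃ j, i = j + 2 := ⟨i - 2, by omega⟩
      have hkj : k ≤ j := by omega
      apply mul_left_cancel₀ (hc j hkj him)
      rw [hx j hkj him, hy j hkj him, ih (j + 1) (by omega) (by omega) (by omega),
        ih j (by omega) hkj (by omega)]

variable {K : Type*} [Field K]

structure IsFirstKind (a b : ℕ → K) (lam : K) (p : ℕ → K) : Prop where
  zero : p 0 = 1
  one : b 0 * p 1 = (lam - a 0) * p 0
  succ_succ : ∀ i, b (i + 1) * p (i + 2) = (lam - a (i + 1)) * p (i + 1) - b i * p i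

namespace IsFirstKind

variable {a b a' b' p p' : ℕ → K} {lam : K}

theorem eq_of_coeff_eq (hp : IsFirstKind a b lam p) (hp' : IsFirstKind a' b' lam p') {m : ℕ}
    (hb : ∀ i < m, b i ≠ 0) (ha : ∀ i < m, a' i = a i) (hb' : ∀ i < m, b' i = b i) :
    ∀ i ≤ m, p' i = p i := by
  intro i
  induction i using Nat.strong_induction_on with
  | _ i ih =>
    intro him
    match i, him with
    | 0, _ => rw [hp'.zero, hp.zero]
    | 1, him =>
      apply mul_left_cancel₀ (hb 0 him)
      rw [← hb' 0 him, hp'.one, hb' 0 him, ha 0 him, hp.one, hp'.zero, hp.zero]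
    | j + 2, him =>
      apply mul_left_cancel₀ (hb (j + 1) him)
      rw [← hb' (j + 1) him, hp'.succ_succ, hb' (j + 1) him, ha (j + 1) him, hb' j (by omega),
        ih (j + 1) (by omega) (by omega), ih j (by omega) (by omega), hp.succ_succ]

theorem succ_eq_inv_mul_of_offDiag_eq_mul (hp : IsFirstKind a b lam p)
    (hp' : IsFirstKind a' b' lam p') {m : ℕ} {θ : K} (hθ : θ ≠ 0) (hb : ∀ i ≤ m, b i ≠ 0)
    (ha : ∀ i ≤ m, a' i = a i) (hb' : ∀ i < m, b' i = b i) (hbm : b' m = θ * b m) :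
    p' (m + 1) = θ⁻¹ * p (m + 1) := by
  rw [eq_inv_mul_iff_mul_eq₀ hθ]
  apply mul_left_cancel₀ (hb m le_rfl)
  rcases m with _ | k
  · rw [← mul_assoc, mul_comm (b 0), ← hbm, hp'.one, hp.one, ha 0 le_rfl, hp'.zero, hp.zero]
  · have hlow := hp.eq_of_coeff_eq hp' (m := k + 1) (fun i hi => hb i hi.le)
      (fun i hi => ha i hi.le) hb'
    rw [← mul_assoc, mul_comm (b _), ← hbm, hp'.succ_succ, hp.succ_succ, ha (k + 1) le_rfl,
      hb' k (by omega), hlow (k + 1) le_rfl, hlow k (by omega)]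

end IsFirstKind

-- `J̃ = D (J + M eₙeₙᵀ) D` with `D = diag(1, …, θ, …, 1)`, the `θ` in position `n`.
structure IsScaledPerturbation (a b a' b' : ℕ → K) (n : ℕ) (θ M : K) : Prop where
  diag_of_ne : ∀ i, i ≠ n → a' i = a i
  diag_self : a' n = θ ^ 2 * (a n + M)
  offDiag_of_ne : ∀ i, i ≠ n → i ≠ n - 1 → b' i = b i
  offDiag_self : b' n = θ * b n
  offDiag_pred : b' (n - 1) = θ * b (n - 1)

namespace IsScaledPerturbation

variable {a b a' b' p p' : ℕ → K} {lam θ M : K} {n : ℕ}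

theorem firstKind_eq_of_lt (hJ : IsScaledPerturbation a b a' b' n θ M)
    (hp : IsFirstKind a b lam p) (hp' : IsFirstKind a' b' lam p') (hb : ∀ i, b i ≠ 0) :
    ∀ i < n, p' i = p i := fun i hi =>
  hp.eq_of_coeff_eq hp' (m := n - 1) (fun j _ => hb j) (fun j _ => hJ.diag_of_ne j (by omega))
    (fun j _ => hJ.offDiag_of_ne j (by omega) (by omega)) i (by omega)

theorem firstKind_self (hJ : IsScaledPerturbation a b a' b' n θ M)
    (hp : IsFirstKind a b lam p) (hp' : IsFirstKind a' b' lam p') (hb : ∀ i, b i ≠ 0)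
    (hθ : θ ≠ 0) (hn : 1 ≤ n) : p' n = θ⁻¹ * p n := by
  obtain ⟨m, rfl⟩ : ∃ m, n = m + 1 := ⟨n - 1, by omega⟩
  exact hp.succ_eq_inv_mul_of_offDiag_eq_mul hp' hθ (fun i _ => hb i)
    (fun i _ => hJ.diag_of_ne i (by omega))
    (fun i _ => hJ.offDiag_of_ne i (by omega) (by omega)) (by simpa using hJ.offDiag_pred)

theorem firstKind_succ (hJ : IsScaledPerturbation a b a' b' n θ M)
    (hp : IsFirstKind a b lam p) (hp' : IsFirstKind a' b' lam p') (hb : ∀ i, b i ≠ 0)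
    (hθ : θ ≠ 0) (hn : 1 ≤ n) :
    p' (n + 1) = (lam * ((θ ^ 2)⁻¹ - 1) - M) / b n * p n + p (n + 1) := by
  have hself := hJ.firstKind_self hp hp' hb hθ hn
  obtain ⟨m, rfl⟩ : ∃ m, n = m + 1 := ⟨n - 1, by omega⟩
  have hpred : b' m = θ * b m := by simpa using hJ.offDiag_pred
  have h := hp'.succ_succ m
  rw [hJ.offDiag_self, hJ.diag_self, hpred, hself,
    hJ.firstKind_eq_of_lt hp hp' hb m (by omega)] at h
  have hbn := hb (m + 1)
  field_simp at h ⊢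
  linear_combination h - θ ^ 2 * hp.succ_succ m

theorem update_succ_succ (hJ : IsScaledPerturbation a b a' b' n θ M)
    (hp : IsFirstKind a b lam p) (hp' : IsFirstKind a' b' lam p') (hb : ∀ i, b i ≠ 0)
    (hθ : θ ≠ 0) (hn : 1 ≤ n) (i : ℕ) (hi : n ≤ i) :
    b (i + 1) * Function.update p' n (p n) (i + 2) =
      (lam - a (i + 1)) * Function.update p' n (p n) (i + 1) -
        b i * Function.update p' n (p n) i := by
  rw [Function.update_of_ne (by omega), Function.update_of_ne (by omega),
    ← hJ.offDiag_of_ne (i + 1) (by omega) (by omega), ← hJ.diag_of_ne (i + 1) (by omega),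
    hp'.succ_succ]
  rcases hi.eq_or_lt with rfl | hi
  · rw [Function.update_self, hJ.offDiag_self, hJ.firstKind_self hp hp' hb hθ hn]
    field_simp
  · rw [Function.update_of_ne (by omega), hJ.offDiag_of_ne i (by omega) (by omega)]

end IsScaledPerturbation

theorem stmt_11_general (N n : ℕ) (hn1 : 1 ≤ n)
    (a b a' b' : ℕ → ℝ) (hb : ∀ i, b i ≠ 0)
    (θ M : ℝ) (hθ : 0 < θ)
    (ha' : ∀ i, i ≠ n → a' i = a i) (han : a' n = θ ^ 2 * (a n + M))
    (hb' : ∀ i, i ≠ n → i ≠ n - 1 → b' i = b i)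
    (hbn : b' n = θ * b n) (hbn1 : b' (n - 1) = θ * b (n - 1))
    (P P' φ : ℕ → ℝ → ℝ)
    (hP0 : ∀ lam, P 0 lam = 1)
    (hP1 : ∀ lam, b 0 * P 1 lam = (lam - a 0) * P 0 lam)
    (hPrec : ∀ i lam, b (i + 1) * P (i + 2) lam =
      (lam - a (i + 1)) * P (i + 1) lam - b i * P i lam)
    (hP'0 : ∀ lam, P' 0 lam = 1)
    (hP'1 : ∀ lam, b' 0 * P' 1 lam = (lam - a' 0) * P' 0 lam)
    (hP'rec : ∀ i lam, b' (i + 1) * P' (i + 2) lam =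
      (lam - a' (i + 1)) * P' (i + 1) lam - b' i * P' i lam)
    (hφn : ∀ lam, φ n lam = 0)
    (hφn1 : ∀ lam, φ (n + 1) lam = 1 / b n)
    (hφrec : ∀ i lam, n + 2 ≤ i → i ≤ N - 1 →
      b (i - 1) * φ i lam = (lam - a (i - 1)) * φ (i - 1) lam - b (i - 2) * φ (i - 2) lam) :
    ∀ i lam, n + 1 ≤ i → i ≤ N - 1 →
      P' i lam = (lam * ((θ ^ 2)⁻¹ - 1) - M) * φ i lam * P n lam + P i lam := by
  intro i lam hi hiN
  have hp : IsFirstKind a b lam (P · lam) := ⟨hP0 lam, hP1 lam, fun j => hPrec j lam⟩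
  have hp' : IsFirstKind a' b' lam (P' · lam) := ⟨hP'0 lam, hP'1 lam, fun j => hP'rec j lam⟩
  have hJ : IsScaledPerturbation a b a' b' n θ M := ⟨ha', han, hb', hbn, hbn1⟩
  set A := lam * ((θ ^ 2)⁻¹ - 1) - M
  have key := eq_of_threeTermRecurrence (k := n) (m := N - 1)
    (x := Function.update (P' · lam) n (P n lam)) (y := fun j => A * φ j lam * P n lam + P j lam)
    (fun j _ _ => hb (j + 1)) (fun j hj _ => hJ.update_succ_succ hp hp' hb hθ.ne' hn1 j hj)
    (fun j hj hjN => by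
      have hφ := hφrec (j + 2) lam (by omega) hjN
      simp only [Nat.add_sub_cancel, Nat.add_succ_sub_one] at hφ
      linear_combination A * P n lam * hφ + hPrec j lam)
    (by simp [hφn])
    (by
      rw [Function.update_of_ne (by omega), hJ.firstKind_succ hp hp' hb hθ.ne' hn1, hφn1]
      ring)
    i (by omega) hiN
  simpa [Function.update_of_ne (show i ≠ n by omega)] using key

/-- First-kind polynomials of the perturbed Jacobi matrix in terms of the first- and
second-kind polynomials of the original one:
`P̃_i = A φ_i P_n + P_i` for `n+1 ≤ i ≤ N-1`, where `A(λ) = λ(θ⁻² - 1) - M`. -/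
theorem stmt_11 (N n : ℕ) (hn1 : 1 ≤ n) (hn2 : n + 2 ≤ N)
    (a b a' b' : ℕ → ℝ) (hb : ∀ i, b i ≠ 0)
    (θ M : ℝ) (hθ : 0 < θ)
    (ha' : ∀ i, i ≠ n → a' i = a i) (han : a' n = θ ^ 2 * (a n + M))
    (hb' : ∀ i, i ≠ n → i ≠ n - 1 → b' i = b i)
    (hbn : b' n = θ * b n) (hbn1 : b' (n - 1) = θ * b (n - 1))
    (P P' φ : ℕ → ℝ → ℝ)
    (hP0 : ∀ lam, P 0 lam = 1)
    (hP1 : ∀ lam, b 0 * P 1 lam = (lam - a 0) * P 0 lam)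
    (hPrec : ∀ i lam, b (i + 1) * P (i + 2) lam =
      (lam - a (i + 1)) * P (i + 1) lam - b i * P i lam)
    (hP'0 : ∀ lam, P' 0 lam = 1)
    (hP'1 : ∀ lam, b' 0 * P' 1 lam = (lam - a' 0) * P' 0 lam)
    (hP'rec : ∀ i lam, b' (i + 1) * P' (i + 2) lam =
      (lam - a' (i + 1)) * P' (i + 1) lam - b' i * P' i lam)
    (hφn : ∀ lam, φ n lam = 0)
    (hφn1 : ∀ lam, φ (n + 1) lam = 1 / b n)
    (hφrec : ∀ i lam, n + 2 ≤ i → i ≤ N - 1 →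
      b (i - 1) * φ i lam = (lam - a (i - 1)) * φ (i - 1) lam - b (i - 2) * φ (i - 2) lam) :
    ∀ i lam, n + 1 ≤ i → i ≤ N - 1 →
      P' i lam = (lam * ((θ ^ 2)⁻¹ - 1) - M) * φ i lam * P n lam + P i lam :=
  stmt_11_general N n hn1 a b a' b' hb θ M hθ ha' han hb' hbn hbn1 P P' φ hP0 hP1 hPrec hP'0 hP'1
    hP'rec hφn hφn1 hφrec
end

section
/- With the setup of the interior perturbation at index 0 < n < N-1 (ã_n = θ²(a_n+M), b̃_{n-1} = θ b_{n-1}, b̃_n = θ b_n), the characteristic-type polynomials satisfy Q̃_N(λ) = Q_N(λ) + A(λ) φ_N(λ) P_n(λ), where A(λ) = λ(θ^{-2}-1) - M, Q_N(λ) = (λ-a_{N-1})P_{N-1}(λ) - b_{N-2}P_{N-2}(λ), and Q̃_N is defined analogously from the P̃_i. -/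
open Matrix BigOperators

/-!
Multiplying `P̃_n` by `θ` undoes the scaling of `b̃_{n-1}` and `b̃_n`: the rescaled sequence `z`
satisfies the unperturbed three-term recurrence at every step except the one producing `z_{n+1}`,
where it picks up the extra term `A(λ) z_n`. Since `z_i = P_i` for `i ≤ n`, variation of constants
gives `z_i = P_i + A(λ) P_n φ_i` for `n ≤ i ≤ N-1` (both sides solve the same recurrence and agree
at `i = n, n+1`, where `φ_n = 0`, `φ_{n+1} = 1/b_n`), and one more step of the recurrence with
`b_{N-1} := 1` turns this into the identity for `Q̃_N`.
-/

theorem eq_zero_of_two_step_recurrence {R : Type*} [Ring R] [NoZeroDivisors R]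
    {u v w D : ℕ → R} {n K : ℕ} (hu : ∀ i, u i ≠ 0) (h0 : D n = 0) (h1 : D (n + 1) = 0)
    (hrec : ∀ i, n ≤ i → i + 2 ≤ K → u i * D (i + 2) = v i * D (i + 1) + w i * D i) :
    ∀ i, n ≤ i → i ≤ K → D i = 0 := by
  intro i
  induction i using Nat.strong_induction_on with
  | _ i ih =>
    intro hni hiK
    rcases (show i = n ∨ i = n + 1 ∨ n + 2 ≤ i by omega) with rfl | rfl | hi
    · exact h0
    · exact h1
    · obtain ⟨j, rfl⟩ : ∃ j, i = j + 2 := ⟨i - 2, by omega⟩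
      have h := hrec j (by omega) hiK
      rw [ih (j + 1) (by omega) (by omega) (by omega), ih j (by omega) (by omega) (by omega),
        mul_zero, mul_zero, add_zero] at h
      exact (mul_eq_zero.mp h).resolve_left (hu j)

def JacobiRec (a b : ℕ → ℝ) (lam : ℝ) (n K : ℕ) (y : ℕ → ℝ) : Prop :=
  ∀ i, n ≤ i → i + 2 ≤ K → b (i + 1) * y (i + 2) = (lam - a (i + 1)) * y (i + 1) - b i * y i

namespace JacobiRec

variable {a b y z : ℕ → ℝ} {lam : ℝ} {n K : ℕ}

theorem add_mul (hy : JacobiRec a b lam n K y) (hz : JacobiRec a b lam n K z) (c : ℝ) :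
    JacobiRec a b lam n K (fun i => y i + c * z i) := fun i hi hiK => by
  linear_combination hy i hi hiK + c * hz i hi hiK

theorem eq_of_eq_of_eq (hb : ∀ i, b i ≠ 0) (hy : JacobiRec a b lam n K y)
    (hz : JacobiRec a b lam n K z) (h0 : y n = z n) (h1 : y (n + 1) = z (n + 1)) :
    ∀ i, n ≤ i → i ≤ K → y i = z i := by
  have := eq_zero_of_two_step_recurrence (D := fun i => y i - z i)
    (u := fun i => b (i + 1)) (v := fun i => lam - a (i + 1)) (w := fun i => -b i)
    (fun i => hb (i + 1)) (sub_eq_zero.mpr h0) (sub_eq_zero.mpr h1)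
    (fun i hi hiK => by linear_combination hy i hi hiK - hz i hi hiK)
  exact fun i hi hiK => sub_eq_zero.mp (this i hi hiK)

end JacobiRec

def rescaleAt (n : ℕ) (θ : ℝ) (y : ℕ → ℝ) : ℕ → ℝ :=
  Function.update y n (θ * y n)

section rescaleAt

variable {a b a' b' y : ℕ → ℝ} {n i : ℕ} {θ lam : ℝ}

theorem rescaleAt_of_ne (h : i ≠ n) : rescaleAt n θ y i = y i :=
  Function.update_of_ne h _ _

theorem rescaleAt_self : rescaleAt n θ y n = θ * y n :=
  Function.update_self _ _ _

theorem sub_mul_rescaleAt (ha' : ∀ i, i ≠ n → a' i = a i) (hi : i ≠ n) :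
    (lam - a' i) * y i = (lam - a i) * rescaleAt n θ y i := by
  rw [ha' i hi, rescaleAt_of_ne hi]

theorem mul_rescaleAt_self (hb' : ∀ i, i ≠ n → i ≠ n - 1 → b' i = b i)
    (hbn : b' n = θ * b n) (hi : i + 1 ≠ n) :
    b' i * y i = b i * rescaleAt n θ y i := by
  rcases eq_or_ne i n with rfl | hin
  · rw [hbn, rescaleAt_self]; ring
  · rw [hb' i hin (by omega), rescaleAt_of_ne hin]

theorem mul_rescaleAt_succ (hb' : ∀ i, i ≠ n → i ≠ n - 1 → b' i = b i)
    (hbn1 : b' (n - 1) = θ * b (n - 1)) (hi : i ≠ n) :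
    b' i * y (i + 1) = b i * rescaleAt n θ y (i + 1) := by
  rcases eq_or_ne i (n - 1) with rfl | hin
  · rw [hbn1, Nat.sub_add_cancel (by omega), rescaleAt_self]; ring
  · rw [hb' i hi hin, rescaleAt_of_ne (by omega)]

theorem rescaleAt_recurrence (ha' : ∀ i, i ≠ n → a' i = a i)
    (hb' : ∀ i, i ≠ n → i ≠ n - 1 → b' i = b i) (hbn : b' n = θ * b n)
    (hbn1 : b' (n - 1) = θ * b (n - 1)) (hi : i + 1 ≠ n)
    (hrec : b' (i + 1) * y (i + 2) = (lam - a' (i + 1)) * y (i + 1) - b' i * y i) :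
    b (i + 1) * rescaleAt n θ y (i + 2) =
      (lam - a (i + 1)) * rescaleAt n θ y (i + 1) - b i * rescaleAt n θ y i := by
  rwa [mul_rescaleAt_succ hb' hbn1 hi, sub_mul_rescaleAt ha' hi,
    mul_rescaleAt_self hb' hbn hi] at hrec

theorem rescaleAt_recurrence_self (M : ℝ) (hθ : θ ≠ 0) (hn : 1 ≤ n)
    (han : a' n = θ ^ 2 * (a n + M)) (hbn : b' n = θ * b n)
    (hbn1 : b' (n - 1) = θ * b (n - 1))
    (hrec : ∀ i, b' (i + 1) * y (i + 2) = (lam - a' (i + 1)) * y (i + 1) - b' i * y i) :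
    b n * rescaleAt n θ y (n + 1) =
      (lam - a n) * rescaleAt n θ y n - b (n - 1) * rescaleAt n θ y (n - 1) +
        (lam * ((θ ^ 2)⁻¹ - 1) - M) * rescaleAt n θ y n := by
  have h := hrec (n - 1)
  rw [show n - 1 + 1 = n by omega, show n - 1 + 2 = n + 1 by omega, han, hbn, hbn1] at h
  rw [rescaleAt_of_ne (by omega), rescaleAt_self, rescaleAt_of_ne (by omega)]
  field_simp
  linear_combination h

end rescaleAt

/-- The perturbed characteristic-type polynomial satisfies
`Q̃_N(λ) = Q_N(λ) + A(λ) φ_N(λ) P_n(λ)` for an interior perturbation `0 < n < N-1`,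
where `A(λ) = λ(θ⁻² - 1) - M` and `b_{N-1} := 1` in the definition of `φ_N`. -/
theorem stmt_12 (N n : ℕ) (hn1 : 1 ≤ n) (hn2 : n + 2 ≤ N)
    (a b a' b' : ℕ → ℝ) (hb : ∀ i, b i ≠ 0)
    (θ M : ℝ) (hθ : 0 < θ)
    (ha' : ∀ i, i ≠ n → a' i = a i) (han : a' n = θ ^ 2 * (a n + M))
    (hb' : ∀ i, i ≠ n → i ≠ n - 1 → b' i = b i)
    (hbn : b' n = θ * b n) (hbn1 : b' (n - 1) = θ * b (n - 1))
    (P P' φ : ℕ → ℝ → ℝ)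
    (hP0 : ∀ lam, P 0 lam = 1)
    (hP1 : ∀ lam, b 0 * P 1 lam = (lam - a 0) * P 0 lam)
    (hPrec : ∀ i lam, b (i + 1) * P (i + 2) lam =
      (lam - a (i + 1)) * P (i + 1) lam - b i * P i lam)
    (hP'0 : ∀ lam, P' 0 lam = 1)
    (hP'1 : ∀ lam, b' 0 * P' 1 lam = (lam - a' 0) * P' 0 lam)
    (hP'rec : ∀ i lam, b' (i + 1) * P' (i + 2) lam =
      (lam - a' (i + 1)) * P' (i + 1) lam - b' i * P' i lam)
    (hφn : ∀ lam, φ n lam = 0)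
    (hφn1 : ∀ lam, φ (n + 1) lam = 1 / b n)
    (hφrec : ∀ i lam, n + 2 ≤ i → i ≤ N - 1 →
      b (i - 1) * φ i lam = (lam - a (i - 1)) * φ (i - 1) lam - b (i - 2) * φ (i - 2) lam)
    (hφN : ∀ lam, φ N lam =
      (lam - a (N - 1)) * φ (N - 1) lam - b (N - 2) * φ (N - 2) lam)
    (Q Q' : ℝ → ℝ)
    (hQ : ∀ lam, Q lam = (lam - a (N - 1)) * P (N - 1) lam - b (N - 2) * P (N - 2) lam)
    (hQ' : ∀ lam, Q' lam =
      (lam - a' (N - 1)) * P' (N - 1) lam - b' (N - 2) * P' (N - 2) lam) :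
    ∀ lam, Q' lam = Q lam + (lam * ((θ ^ 2)⁻¹ - 1) - M) * φ N lam * P n lam := by
  intro lam
  set A := lam * ((θ ^ 2)⁻¹ - 1) - M
  set z := rescaleAt n θ (fun i => P' i lam) with hz_def
  have hz : ∀ i, i + 1 ≠ n →
      b (i + 1) * z (i + 2) = (lam - a (i + 1)) * z (i + 1) - b i * z i :=
    fun i hi => rescaleAt_recurrence ha' hb' hbn hbn1 hi (hP'rec i lam)
  have hP : ∀ m K, JacobiRec a b lam m K (P · lam) := fun _ _ i _ _ => hPrec i lam
  have hz0 : z 0 = P 0 lam := by rw [hz_def, rescaleAt_of_ne (by omega), hP0, hP'0]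
  have hz1 : z 1 = P 1 lam := mul_left_cancel₀ (hb 0) (by
    rw [← mul_rescaleAt_succ hb' hbn1 (by omega), hP1, ← hz0, hz_def,
      ← sub_mul_rescaleAt ha' (by omega)]
    exact hP'1 lam)
  have hzP : ∀ i ≤ n, z i = P i lam := fun i hi =>
    JacobiRec.eq_of_eq_of_eq hb (fun i _ hi => hz i (by omega)) (hP 0 n) hz0 hz1 i
      (Nat.zero_le i) hi
  have hzn : b n * z (n + 1) = (lam - a n) * z n - b (n - 1) * z (n - 1) + A * z n :=
    rescaleAt_recurrence_self M hθ.ne' hn1 han hbn hbn1 (hP'rec · lam)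
  have hPn : b n * P (n + 1) lam = (lam - a n) * P n lam - b (n - 1) * P (n - 1) lam := by
    have := hPrec (n - 1) lam
    rwa [show n - 1 + 1 = n by omega, show n - 1 + 2 = n + 1 by omega] at this
  have hφ : JacobiRec a b lam n (N - 1) (φ · lam) := fun i hi hiN =>
    hφrec (i + 2) lam (by omega) hiN
  have hzφ : ∀ i, n ≤ i → i ≤ N - 1 → z i = P i lam + A * P n lam * φ i lam :=
    JacobiRec.eq_of_eq_of_eq hb (fun i hi _ => hz i (by omega)) ((hP n (N - 1)).add_mul hφ _)
      (by rw [hφn, hzP n le_rfl]; ring)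
      (mul_left_cancel₀ (hb n) (by
        rw [hφn1]
        linear_combination hzn - hPn + (lam - a n + A) * hzP n le_rfl
          - b (n - 1) * hzP (n - 1) (by omega) - A * P n lam * mul_one_div_cancel (hb n)))
  have hQ'z : Q' lam = (lam - a (N - 1)) * z (N - 1) - b (N - 2) * z (N - 2) := by
    rw [hQ', sub_mul_rescaleAt (y := fun i => P' i lam) ha' (by omega),
      mul_rescaleAt_self (y := fun i => P' i lam) hb' hbn (by omega)]
  rw [hQ'z, hQ, hφN, hzφ (N - 1) (by omega) le_rfl, hzφ (N - 2) (by omega) (by omega)]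
  ring
end

section
/- Let λ_1 < λ_2 < ⋯ < λ_N and λ̃_1 < λ̃_2 < ⋯ < λ̃_N be real numbers with λ_j ≤ λ̃_j ≤ λ_{j+1} for all j (interlacing, with λ_{N+1} = +∞), and let K ∈ ℝ with K ∉ {λ_1,...,λ_N}. Define β_j = ∏_{i=1}^N (λ_j - λ̃_i) / [ (λ_j - K) ∏_{i ≠ j} (λ_j - λ_i) ]. If additionally λ_p < K ≤ λ_{p+1} and there is exactly one λ̃ in each of the intervals [λ_j, λ_{j+1}) for j < p, (λ_j, λ_{j+1}] for j > p, [λ_p, K), and (K, λ_{p+1}], then β_j ≥ 0 for every j. -/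
/-!
Pair the factor `λ_j - λ̃_i` of the numerator with the factor `λ_j - λ_i` of the denominator.
For `i < j` both are nonnegative (interlacing gives `λ̃_i ≤ λ_{i+1} ≤ λ_j`), and for `i > j`
both are negative (`λ_j < λ_i ≤ λ̃_i`). What remains is `(λ_j - λ̃_j) / (λ_j - K)`: for `j < p`
both factors are `≤ 0` since `λ_j ≤ λ̃_j` and `λ_j < K`, while for `j ≥ p` the conditions force
`λ̃_j = λ_j`, so `β_j = 0`.
-/

open Finset

theorem prod_mul_mul_prod_erase_eq {R ι : Type*} [CommRing R] [Fintype ι] [DecidableEq ι]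
    (x K : R) (lam lamt : ι → R) (j : ι) :
    (∏ i, (x - lamt i)) * ((x - K) * ∏ i ∈ univ.erase j, (x - lam i)) =
      ((x - lamt j) * (x - K)) * ∏ i ∈ univ.erase j, ((x - lamt i) * (x - lam i)) := by
  rw [← mul_prod_erase univ (fun i => x - lamt i) (mem_univ j), prod_mul_distrib]
  ring

section Residue

variable {𝕜 ι : Type*} [Field 𝕜] [LinearOrder 𝕜] [IsStrictOrderedRing 𝕜] [LinearOrder ι]

theorem interlacing_factor_nonneg {lam lamt : ι → 𝕜} (hlam : StrictMono lam)
    (hle : ∀ i, lam i ≤ lamt i) (hgap : ∀ i j, i < j → lamt i ≤ lam j) {i j : ι} (hij : i ≠ j) :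
    0 ≤ (lam j - lamt i) * (lam j - lam i) := by
  rcases hij.lt_or_gt with hij | hji
  · exact mul_nonneg (sub_nonneg.2 (hgap i j hij)) (sub_nonneg.2 (hlam hij).le)
  · exact mul_nonneg_of_nonpos_of_nonpos (by linarith [hle i, hlam hji]) (by linarith [hlam hji])

theorem residue_nonneg_of_interlacing [Fintype ι] [DecidableEq ι] {lam lamt : ι → 𝕜} {K : 𝕜}
    (hlam : StrictMono lam) (hle : ∀ i, lam i ≤ lamt i) (hgap : ∀ i j, i < j → lamt i ≤ lam j)
    {j : ι} (hj : 0 ≤ (lam j - lamt j) * (lam j - K)) :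
    0 ≤ (∏ i, (lam j - lamt i)) / ((lam j - K) * ∏ i ∈ univ.erase j, (lam j - lam i)) := by
  have hmul :
      0 ≤ (∏ i, (lam j - lamt i)) * ((lam j - K) * ∏ i ∈ univ.erase j, (lam j - lam i)) := by
    rw [prod_mul_mul_prod_erase_eq]
    exact mul_nonneg hj <| prod_nonneg fun i hi =>
      interlacing_factor_nonneg hlam hle hgap (ne_of_mem_erase hi)
  exact div_nonneg_iff.2 (mul_nonneg_iff.1 hmul)

end Residue

theorem Fin.le_of_lt_of_le_succ {α : Type*} [Preorder α] {N : ℕ} {lam lamt : Fin N → α}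
    (hlam : Monotone lam)
    (hsucc : ∀ j : Fin N, ∀ h : (j : ℕ) + 1 < N, lamt j ≤ lam ⟨(j : ℕ) + 1, h⟩)
    (i j : Fin N) (hij : i < j) : lamt i ≤ lam j :=
  (hsucc i (by omega)).trans (hlam (Fin.le_def.2 (show (i : ℕ) + 1 ≤ j by omega)))

theorem stmt_16_general (N : ℕ) (lam lamt : Fin N → ℝ)
    (hlam : StrictMono lam)
    (hinter : ∀ j : Fin N, lam j ≤ lamt j ∧
      ∀ h : (j : ℕ) + 1 < N, lamt j ≤ lam ⟨(j : ℕ) + 1, h⟩)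
    (K : ℝ)
    (p : ℕ) (hp : p ≤ N)
    (hpK1 : ∀ j : Fin N, (j : ℕ) + 1 = p → lam j < K)
    (h3 : ∀ j : Fin N, (j : ℕ) = p → K < lamt j ∧ lamt j ≤ lam j)
    (h4 : ∀ j : Fin N, p + 1 ≤ (j : ℕ) →
      lam ⟨(j : ℕ) - 1, lt_of_le_of_lt (Nat.sub_le _ _) j.isLt⟩ < lamt j ∧ lamt j ≤ lam j)
    (j : Fin N) :
    0 ≤ (∏ i, (lam j - lamt i)) /
        ((lam j - K) * ∏ i ∈ Finset.univ.erase j, (lam j - lam i)) := by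
  refine residue_nonneg_of_interlacing hlam (fun i => (hinter i).1)
    (Fin.le_of_lt_of_le_succ hlam.monotone fun i => (hinter i).2) ?_
  rcases lt_or_ge (j : ℕ) p with hjp | hpj
  · have hK : lam j < K :=
      (hlam.monotone (Fin.le_def.2 (show (j : ℕ) ≤ p - 1 by omega))).trans_lt
        (hpK1 ⟨p - 1, by omega⟩ (show p - 1 + 1 = p by omega))
    exact mul_nonneg_of_nonpos_of_nonpos (by linarith [(hinter j).1]) (by linarith)
  · have hle : lamt j ≤ lam j :=
      hpj.eq_or_lt.elim (fun h => (h3 j h.symm).2) (fun h => (h4 j h).2)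
    rw [le_antisymm hle (hinter j).1, sub_self, zero_mul]

/-- Positivity of the residues `β_j` of `N(λ)/(λ-K)` under the interlacing conditions of
Theorem 3 of the paper (here stated with 0-based indices `j = 0,…,N-1` corresponding to the
paper's `j = 1,…,N`; `λ_{N+1} = +∞` and `λ_0 = -∞` in the paper become vacuous guards). -/
theorem stmt_16 (N : ℕ) (lam lamt : Fin N → ℝ)
    (hlam : StrictMono lam) (hlamt : StrictMono lamt)
    (hinter : ∀ j : Fin N, lam j ≤ lamt j ∧
      ∀ h : (j : ℕ) + 1 < N, lamt j ≤ lam ⟨(j : ℕ) + 1, h⟩)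
    (K : ℝ) (hK : ∀ j, K ≠ lam j)
    (p : ℕ) (hp : p ≤ N)
    (hpK1 : ∀ j : Fin N, (j : ℕ) + 1 = p → lam j < K)
    (hpK2 : ∀ j : Fin N, (j : ℕ) = p → K ≤ lam j)
    (h1 : ∀ j : Fin N, ∀ h : (j : ℕ) + 1 < p,
      lam j ≤ lamt j ∧ lamt j < lam ⟨(j : ℕ) + 1, lt_of_lt_of_le h hp⟩)
    (h2 : ∀ j : Fin N, (j : ℕ) + 1 = p → lam j ≤ lamt j ∧ lamt j < K)
    (h3 : ∀ j : Fin N, (j : ℕ) = p → K < lamt j ∧ lamt j ≤ lam j)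
    (h4 : ∀ j : Fin N, p + 1 ≤ (j : ℕ) →
      lam ⟨(j : ℕ) - 1, lt_of_le_of_lt (Nat.sub_le _ _) j.isLt⟩ < lamt j ∧ lamt j ≤ lam j)
    (j : Fin N) :
    0 ≤ (∏ i, (lam j - lamt i)) /
        ((lam j - K) * ∏ i ∈ Finset.univ.erase j, (lam j - lam i)) :=
  stmt_16_general N lam lamt hlam hinter K p hp hpK1 h3 h4 j
end

section
/- Let J be an N×N Jacobi matrix with nonzero off-diagonals, fix 1 ≤ n ≤ N-2, and let G(λ) = ⟨δ_n, (J - λ)^{-1} δ_n⟩, m_+(λ) = ⟨δ_{n+1}, (J_{[n+1,N-1]} - λ)^{-1} δ_{n+1}⟩, m_-(λ) = ⟨δ_{n-1}, (J_{[0,n-1]} - λ)^{-1} δ_{n-1}⟩. Then for all λ not an eigenvalue of J, J_{[0,n-1]}, or J_{[n+1,N-1]}: -G(λ)^{-1} = λ - a_n + b_n² m_+(λ) + b_{n-1}² m_-(λ), provided G(λ) ≠ 0. -/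
/-!
Let `u` be the `n`-th column of `(J - λ)⁻¹`, so `(J - λ) u = δ_n`. Because `J` is tridiagonal,
the restriction of `u` to `[0, n-1]` solves `(J_{[0,n-1]} - λ) u = -b_{n-1} u_n δ_{n-1}` and its
restriction to `[n+1, N-1]` solves `(J_{[n+1,N-1]} - λ) u = -b_n u_n δ_{n+1}`; hence
`u_{n-1} = -b_{n-1} m_- u_n` and `u_{n+1} = -b_n m_+ u_n`. Substituting these into row `n`,
`b_{n-1} u_{n-1} + (a_n - λ) u_n + b_n u_{n+1} = 1`, and using `u_n = G` gives the identity.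
Since `J - λ` is again a Jacobi matrix (with diagonal `a - λ`), it suffices to treat `λ = 0`.
-/

open Matrix BigOperators

/-- The `N × N` Jacobi matrix with diagonal `a` and off-diagonals `b`. -/
def jacobi (N : ℕ) (a b : ℕ → ℝ) : Matrix (Fin N) (Fin N) ℝ :=
  Matrix.of fun i j =>
    if (i : ℕ) = (j : ℕ) then a i
    else if (i : ℕ) + 1 = (j : ℕ) then b i
    else if (j : ℕ) + 1 = (i : ℕ) then b j
    else 0

/-- `μ` is an eigenvalue of the real matrix `M`. -/
def isEig {m : ℕ} (M : Matrix (Fin m) (Fin m) ℝ) (μ : ℝ) : Prop :=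
  ∃ v : Fin m → ℝ, v ≠ 0 ∧ M.mulVec v = μ • v

theorem jacobi_sub_smul_one (N : ℕ) (a b : ℕ → ℝ) (c : ℝ) :
    jacobi N a b - c • (1 : Matrix (Fin N) (Fin N) ℝ) = jacobi N (fun k => a k - c) b := by
  ext i j
  simp only [jacobi, Matrix.sub_apply, Matrix.smul_apply, one_apply, of_apply, Fin.ext_iff,
    smul_eq_mul]
  split_ifs <;> first | omega | ring1

theorem jacobi_mulVec_apply (N : ℕ) (a b v : ℕ → ℝ) (i : Fin N) :
    (jacobi N a b *ᵥ fun j => v j) i =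
      (if (i : ℕ) + 1 < N then b i * v (i + 1) else 0) + a i * v i +
        (if 0 < (i : ℕ) then b (i - 1) * v (i - 1) else 0) := by
  obtain ⟨i, hi⟩ := i
  have hentry : ∀ j, (if i = j then a i else if i + 1 = j then b i
      else if j + 1 = i then b j else 0) * v j =
      (if i + 1 = j then b i * v (i + 1) else 0) + (if i = j then a i * v i else 0) +
        (if i - 1 = j ∧ 0 < i then b (i - 1) * v (i - 1) else 0) := by
    intro j
    split_ifs <;> first | omega | (subst_vars; simp)
  simp only [mulVec, dotProduct, jacobi, of_apply]
  rw [Fin.sum_univ_eq_sum_range (fun j => (if i = j then a i else if i + 1 = j then b i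
    else if j + 1 = i then b j else 0) * v j), Finset.sum_congr rfl fun j _ => hentry j]
  simp [Finset.sum_add_distrib, Finset.sum_ite_eq, hi, ite_and, show i - 1 < N by omega]

theorem jacobi_shift_mulVec_apply {N m p : ℕ} (hpm : p + m ≤ N) (a b v : ℕ → ℝ) (i : Fin m) :
    (jacobi m (fun k => a (p + k)) (fun k => b (p + k)) *ᵥ fun j => v (p + j)) i =
      (jacobi N a b *ᵥ fun j => v j) ⟨p + i, by omega⟩
        - (if (i : ℕ) = 0 ∧ 0 < p then b (p - 1) * v (p - 1) else 0)
        - (if (i : ℕ) + 1 = m ∧ p + m < N then b (p + m - 1) * v (p + m) else 0) := by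
  obtain ⟨i, hi⟩ := i
  rw [jacobi_mulVec_apply m _ _ (fun k => v (p + k)), jacobi_mulVec_apply N a b v]
  dsimp only
  obtain h | rfl : i + 1 < m ∨ i + 1 = m := by omega
  all_goals
    rcases i with _ | i <;>
      simp only [← add_assoc, add_zero, zero_add, Nat.add_sub_cancel, true_and, false_and,
        Nat.succ_ne_zero, lt_self_iff_false, ↓reduceIte] <;>
      split_ifs <;> first | omega | ring1

theorem isUnit_det_sub_smul_one_of_not_isEig {m : ℕ} {M : Matrix (Fin m) (Fin m) ℝ} {μ : ℝ}
    (h : ¬ isEig M μ) : IsUnit (M - μ • (1 : Matrix (Fin m) (Fin m) ℝ)).det := by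
  rw [isUnit_iff_ne_zero]
  intro hdet
  obtain ⟨v, hv, hMv⟩ := Matrix.exists_mulVec_eq_zero_iff.mpr hdet
  refine h ⟨v, hv, ?_⟩
  rwa [sub_mulVec, smul_mulVec, one_mulVec, sub_eq_zero] at hMv

theorem Matrix.apply_eq_inv_apply_mul_of_mulVec_eq_single {ι K : Type*} [Fintype ι]
    [DecidableEq ι] [Field K] {M : Matrix ι ι K} (hM : IsUnit M.det) {x : ι → K} {j : ι} {c : K}
    (h : M *ᵥ x = Pi.single j c) (i : ι) : x i = M⁻¹ i j * c := by
  have hx : x = M⁻¹ *ᵥ (M *ᵥ x) := by rw [mulVec_mulVec, nonsing_inv_mul _ hM, one_mulVec]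
  rw [hx, h, mulVec_single]
  simp

theorem jacobi_inv_diag_splitting {N n : ℕ} (hn : 0 < n) (hnN : n + 1 < N) (a b : ℕ → ℝ)
    (hJ : IsUnit (jacobi N a b).det) (hL : IsUnit (jacobi n a b).det)
    (hR : IsUnit (jacobi (N - n - 1) (fun i => a (n + 1 + i)) (fun i => b (n + 1 + i))).det) :
    -((jacobi N a b)⁻¹ ⟨n, by omega⟩ ⟨n, by omega⟩)⁻¹ =
      -a n + b n ^ 2 * (jacobi (N - n - 1) (fun i => a (n + 1 + i)) (fun i => b (n + 1 + i)))⁻¹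
          ⟨0, by omega⟩ ⟨0, by omega⟩ +
        b (n - 1) ^ 2 * (jacobi n a b)⁻¹ ⟨n - 1, by omega⟩ ⟨n - 1, by omega⟩ := by
  set G := (jacobi N a b)⁻¹ ⟨n, by omega⟩ ⟨n, by omega⟩
  set mPlus := (jacobi (N - n - 1) (fun i => a (n + 1 + i)) (fun i => b (n + 1 + i)))⁻¹
    ⟨0, by omega⟩ ⟨0, by omega⟩
  set mMinus := (jacobi n a b)⁻¹ ⟨n - 1, by omega⟩ ⟨n - 1, by omega⟩
  set u : ℕ → ℝ := fun k => if h : k < N then (jacobi N a b)⁻¹ ⟨k, h⟩ ⟨n, by omega⟩ else 0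
  have hun : u n = G := dif_pos _
  have hu : jacobi N a b *ᵥ (fun j : Fin N => u j) = Pi.single ⟨n, by omega⟩ 1 := by
    have hcol : (fun j : Fin N => u j) = (jacobi N a b)⁻¹ *ᵥ Pi.single ⟨n, by omega⟩ 1 := by
      ext j
      simp [u]
    rw [hcol, mulVec_mulVec, mul_nonsing_inv _ hJ, one_mulVec]
  have hminus : u (n - 1) = mMinus * -(b (n - 1) * G) := by
    refine apply_eq_inv_apply_mul_of_mulVec_eq_single (x := fun j : Fin n => u j) hL ?_
      ⟨n - 1, by omega⟩
    ext i
    have hi := i.isLt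
    have hshift := jacobi_shift_mulVec_apply (N := N) (p := 0) (by omega) a b u i
    simp only [zero_add] at hshift
    rw [hshift, hu, hun]
    simp only [Pi.single_apply, Fin.ext_iff]
    split_ifs <;> first | omega | ring1
  have hplus : u (n + 1) = mPlus * -(b n * G) := by
    refine apply_eq_inv_apply_mul_of_mulVec_eq_single
      (x := fun j : Fin (N - n - 1) => u (n + 1 + j)) hR ?_ ⟨0, by omega⟩
    ext i
    have hi := i.isLt
    rw [jacobi_shift_mulVec_apply (N := N) (p := n + 1) (by omega) a b u i, hu]
    simp only [Pi.single_apply, Fin.ext_iff, Nat.add_sub_cancel, hun]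
    split_ifs <;> first | omega | ring1
  have hrow : b n * u (n + 1) + a n * G + b (n - 1) * u (n - 1) = 1 := by
    have := congrFun hu ⟨n, by omega⟩
    rw [jacobi_mulVec_apply] at this
    simpa [hun, hn, hnN] using this
  have hG : -(-a n + b n ^ 2 * mPlus + b (n - 1) ^ 2 * mMinus) * G = 1 := by
    rw [hplus, hminus] at hrow
    linear_combination hrow
  linear_combination eq_inv_of_mul_eq_one_left hG

/-- The resolvent splitting identity
`-G(λ)⁻¹ = λ - a_n + b_n² m_+(λ) + b_{n-1}² m_-(λ)` for an interior index `1 ≤ n ≤ N-2`,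
where `G(λ) = ⟨δ_n, (J-λ)⁻¹δ_n⟩`, `m_+(λ) = ⟨δ_{n+1}, (J_{[n+1,N-1]}-λ)⁻¹δ_{n+1}⟩` and
`m_-(λ) = ⟨δ_{n-1}, (J_{[0,n-1]}-λ)⁻¹δ_{n-1}⟩`. -/
theorem stmt_18 (N n : ℕ) (hn1 : 1 ≤ n) (hn2 : n + 2 ≤ N)
    (a b : ℕ → ℝ) (lam : ℝ)
    (h1 : ¬ isEig (jacobi N a b) lam)
    (h2 : ¬ isEig (jacobi n a b) lam)
    (h3 : ¬ isEig (jacobi (N - n - 1) (fun i => a (n + 1 + i)) (fun i => b (n + 1 + i))) lam) :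
    -(((jacobi N a b - lam • (1 : Matrix (Fin N) (Fin N) ℝ))⁻¹)
        ⟨n, by omega⟩ ⟨n, by omega⟩)⁻¹ =
      lam - a n +
        (b n) ^ 2 * ((jacobi (N - n - 1) (fun i => a (n + 1 + i)) (fun i => b (n + 1 + i)) -
          lam • (1 : Matrix (Fin (N - n - 1)) (Fin (N - n - 1)) ℝ))⁻¹)
            ⟨0, by omega⟩ ⟨0, by omega⟩ +
        (b (n - 1)) ^ 2 * ((jacobi n a b -
          lam • (1 : Matrix (Fin n) (Fin n) ℝ))⁻¹) ⟨n - 1, by omega⟩ ⟨n - 1, by omega⟩ := by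
  have hJ := isUnit_det_sub_smul_one_of_not_isEig h1
  have hL := isUnit_det_sub_smul_one_of_not_isEig h2
  have hR := isUnit_det_sub_smul_one_of_not_isEig h3
  rw [jacobi_sub_smul_one] at hJ hL hR
  simp only [jacobi_sub_smul_one]
  linear_combination jacobi_inv_diag_splitting (by omega) (by omega) (fun k => a k - lam) b hJ hL hR
end
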